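/- The category FPCM of trace monoids and basic homomorphisms is cocomplete, and the inclusion functor FPCM → Mon preserves all small colimits. -/

import Mathlib

open CategoryTheory

/-- The elementary commutation relation on words generated by an independence relation. -/
def traceRel (E : Type) (I : Set (E × E)) : FreeMonoid E → FreeMonoid E → Prop :=
  fun x y => ∃ a b : E, (a, b) ∈ I ∧ x = FreeMonoid.of a * FreeMonoid.of b ∧
    y = FreeMonoid.of b * FreeMonoid.of a

/-- The congruence on the free monoid generated by commutation of independent pairs. -/
def traceCon (E : Type) (I : Set (E × E)) : Con (FreeMonoid E) := conGen (traceRel E I)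

/-- The trace monoid `M(E,I)`. -/
abbrev TraceMonoid (E : Type) (I : Set (E × E)) : Type := (traceCon E I).Quotient

/-- The canonical projection from words to traces. -/
def trcMk {E : Type} {I : Set (E × E)} : FreeMonoid E →* TraceMonoid E I :=
  (traceCon E I).mk'

/-- The generator of the trace monoid corresponding to an event `e`. -/
def trc {E : Type} {I : Set (E × E)} (e : E) : TraceMonoid E I :=
  trcMk (FreeMonoid.of e)

/-- `I` is an independence relation: irreflexive and symmetric. -/
structure IsIndep {E : Type} (I : Set (E × E)) : Prop where
  irrefl : ∀ a : E, (a, a) ∉ I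
  symm : ∀ a b : E, (a, b) ∈ I → (b, a) ∈ I

/-- A homomorphism of trace monoids is basic if it sends generators to generators or to `1`. -/
def IsBasic {E E' : Type} {I : Set (E × E)} {I' : Set (E' × E')}
    (f : TraceMonoid E I →* TraceMonoid E' I') : Prop :=
  ∀ e : E, (∃ e' : E', f (trc e) = trc e') ∨ f (trc e) = 1

/-- A basic homomorphism preserves independence. -/
def IsIndepPres {E E' : Type} {I : Set (E × E)} {I' : Set (E' × E')}
    (f : TraceMonoid E I →* TraceMonoid E' I') : Prop :=
  ∀ a b : E, (a, b) ∈ I → f (trc a) ≠ f (trc b) ∨ (f (trc a) = 1 ∧ f (trc b) = 1)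

/-- The monoid homomorphism out of a trace monoid induced by a map on generators whose
images commute at independent pairs. -/
def liftHom {E : Type} {I : Set (E × E)} {N : Type*} [Monoid N] (φ : E → N)
    (hφ : ∀ a b : E, (a, b) ∈ I → φ a * φ b = φ b * φ a) : TraceMonoid E I →* N :=
  (traceCon E I).lift (FreeMonoid.lift φ) (by
    refine @id (traceCon E I ≤ Con.ker (FreeMonoid.lift φ)) (Con.conGen_le.2 ?_)
    rintro x y ⟨a, b, hab, rfl, rfl⟩
    rw [Con.ker_rel]
    simp only [map_mul, FreeMonoid.lift_eval_of]
    exact hφ a b hab)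

@[simp] theorem liftHom_trc {E : Type} {I : Set (E × E)} {N : Type*} [Monoid N] (φ : E → N)
    (hφ : ∀ a b : E, (a, b) ∈ I → φ a * φ b = φ b * φ a) (e : E) :
    liftHom φ hφ (trc (I := I) e) = φ e := by
  show (traceCon E I).lift _ _ ((traceCon E I).mk' (FreeMonoid.of e)) = φ e
  rw [Con.lift_mk']
  simp

theorem trc_comm {E : Type} {I : Set (E × E)} {a b : E} (h : (a, b) ∈ I) :
    (trc a : TraceMonoid E I) * trc b = trc b * trc a := by
  show trcMk (FreeMonoid.of a) * trcMk (FreeMonoid.of b) =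
    trcMk (FreeMonoid.of b) * trcMk (FreeMonoid.of a)
  rw [← map_mul, ← map_mul]
  exact (Con.eq _).2 (ConGen.Rel.of _ _ ⟨a, b, h, rfl, rfl⟩)

theorem isBasic_id {E : Type} {I : Set (E × E)} :
    IsBasic (MonoidHom.id (TraceMonoid E I)) := fun e => Or.inl ⟨e, rfl⟩

theorem isBasic_comp {E₁ E₂ E₃ : Type} {I₁ : Set (E₁ × E₁)} {I₂ : Set (E₂ × E₂)}
    {I₃ : Set (E₃ × E₃)} {f : TraceMonoid E₁ I₁ →* TraceMonoid E₂ I₂}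
    {g : TraceMonoid E₂ I₂ →* TraceMonoid E₃ I₃} (hf : IsBasic f) (hg : IsBasic g) :
    IsBasic (g.comp f) := by
  intro e
  rcases hf e with ⟨e', he⟩ | he
  · rcases hg e' with ⟨e'', he''⟩ | he''
    · exact Or.inl ⟨e'', by simp [MonoidHom.comp_apply, he, he'']⟩
    · exact Or.inr (by simp [MonoidHom.comp_apply, he, he''])
  · exact Or.inr (by simp [MonoidHom.comp_apply, he])
/-- An object of the category `FPCM`: a set of events with an independence relation. -/
structure FPCMObj where
  E : Type
  I : Set (E × E)
  indep : IsIndep I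

/-- The category `FPCM` of trace monoids and basic homomorphisms. -/
instance : Category FPCMObj where
  Hom X Y := {f : TraceMonoid X.E X.I →* TraceMonoid Y.E Y.I // IsBasic f}
  id _ := ⟨MonoidHom.id _, isBasic_id⟩
  comp f g := ⟨g.1.comp f.1, isBasic_comp f.2 g.2⟩
  id_comp _ := Subtype.ext (MonoidHom.comp_id _)
  comp_id _ := Subtype.ext (MonoidHom.id_comp _)
  assoc _ _ _ := Subtype.ext rfl

/-- The inclusion functor from `FPCM` into the category of monoids. -/
def UFPCM : FPCMObj ⥤ MonCat.{0} where
  obj X := MonCat.of (TraceMonoid X.E X.I)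
  map f := MonCat.ofHom f.1
  map_id _ := rfl
  map_comp _ _ := rfl

/-- The independence relation on the non-identity elements of a monoid given by distinct
commuting pairs. -/
def IMon (M : Type) [Monoid M] : Set ({m : M // m ≠ 1} × {m : M // m ≠ 1}) :=
  {p | p.1 ≠ p.2 ∧ (p.1 : M) * (p.2 : M) = (p.2 : M) * (p.1 : M)}

/-- The trace monoid `M(M \ {1}, I_M)` associated to a monoid `M`. -/
def RFPCMObj (M : MonCat.{0}) : FPCMObj where
  E := {m : M // m ≠ 1}
  I := IMon M
  indep := ⟨fun _ h => h.1 rfl, fun _ _ h => ⟨fun e => h.1 e.symm, h.2.symm⟩⟩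

/-- The counit homomorphism `ε_M : M(M \ {1}, I_M) → M`, defined on generators by
`ε_M(μ) = μ`. -/
def epsFPCM (M : MonCat.{0}) :
    TraceMonoid (RFPCMObj M).E (RFPCMObj M).I →* M :=
  liftHom (fun m : {m : M // m ≠ 1} => m.val) (fun _ _ h => h.2)

open CategoryTheory.Limits

/-!
Colimits are built on events: the events of the colimit of `F` are the events of all `F j`,
together with a base point standing for `1`, modulo identifying an event with its image under
each transition map (or with the base point when that image is `1`); two classes are independent
when they have independent representatives in a common `F j`. A basic homomorphism is determined
by where it sends generators, and a cocone sends identified events to the same generator or to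
`1`, which gives the universal property.

Preservation holds because the inclusion is a left adjoint: a monoid homomorphism
`g : M(E, I) → M` corresponds to the basic homomorphism sending `e` to the generator `g e` of
`M(M \ {1}, I_M)`, or to `1` when `g e = 1`; images of independent events commute in `M`, hence
are equal, independent in `I_M`, or `1`.
-/

namespace TraceMonoid

variable {E : Type} {I : Set (E × E)}

theorem hom_ext {N : Type*} [Monoid N] {f g : TraceMonoid E I →* N}
    (h : ∀ e : E, f (trc e) = g (trc e)) : f = g := by
  have hfree : f.comp trcMk = g.comp trcMk := FreeMonoid.hom_eq h
  refine MonoidHom.ext fun x => ?_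
  obtain ⟨w, rfl⟩ := Con.mk'_surjective x
  exact DFunLike.congr_fun hfree w

theorem isBasic_liftHom {E' : Type} {I' : Set (E' × E')} {φ : E → TraceMonoid E' I'}
    (hφ : ∀ a b : E, (a, b) ∈ I → φ a * φ b = φ b * φ a)
    (h : ∀ e : E, (∃ e', φ e = trc e') ∨ φ e = 1) : IsBasic (liftHom φ hφ) := by
  intro e
  rw [liftHom_trc]
  exact h e

end TraceMonoid

open Classical in
noncomputable def trcOrOne {X : Type} (o : X) {I : Set ({x // x ≠ o} × {x // x ≠ o})} (x : X) :
    TraceMonoid {x // x ≠ o} I :=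
  if h : x = o then 1 else trc ⟨x, h⟩

section TrcOrOne

variable {X : Type} {o : X} {I : Set ({x // x ≠ o} × {x // x ≠ o})}

@[simp] theorem trcOrOne_self : trcOrOne (I := I) o o = 1 := dif_pos rfl

theorem trcOrOne_of_ne {x : X} (h : x ≠ o) : trcOrOne (I := I) o x = trc ⟨x, h⟩ := dif_neg h

@[simp] theorem trcOrOne_coe (x : {x // x ≠ o}) : trcOrOne (I := I) o x = trc x :=
  trcOrOne_of_ne x.2

theorem trcOrOne_eq_trc_or_eq_one (x : X) :
    (∃ e, trcOrOne (I := I) o x = trc e) ∨ trcOrOne (I := I) o x = 1 := by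
  by_cases hx : x = o
  · exact Or.inr (by rw [hx, trcOrOne_self])
  · exact Or.inl ⟨_, trcOrOne_of_ne hx⟩

theorem trcOrOne_mul_comm {x y : X}
    (h : ∀ (hx : x ≠ o) (hy : y ≠ o), x ≠ y → (⟨x, hx⟩, ⟨y, hy⟩) ∈ I) :
    trcOrOne (I := I) o x * trcOrOne o y = trcOrOne o y * trcOrOne o x := by
  by_cases hx : x = o
  · simp [hx]
  by_cases hy : y = o
  · simp [hy]
  by_cases hxy : x = y
  · rw [hxy]
  rw [trcOrOne_of_ne hx, trcOrOne_of_ne hy]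
  exact trc_comm (h hx hy hxy)

theorem map_trcOrOne {N : Type*} [Monoid N] (g : TraceMonoid {x // x ≠ o} I →* N) {φ : X → N}
    (hg : ∀ x : {x // x ≠ o}, g (trc x) = φ x) (hφ : φ o = 1) (x : X) :
    g (trcOrOne o x) = φ x := by
  by_cases hx : x = o
  · rw [hx, trcOrOne_self, map_one, hφ]
  · rw [trcOrOne_of_ne hx, hg]

end TrcOrOne

theorem FPCMObj.hom_ext {X Y : FPCMObj} {f g : X ⟶ Y}
    (h : ∀ e : X.E, f.1 (trc e) = g.1 (trc e)) : f = g :=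
  Subtype.ext (TraceMonoid.hom_ext h)

theorem FPCMObj.cocone_w_apply {J : Type} [Category J] {F : J ⥤ FPCMObj} (c : Cocone F)
    {j k : J} (u : j ⟶ k) (x : TraceMonoid (F.obj j).E (F.obj j).I) :
    (c.ι.app k).1 ((F.map u).1 x) = (c.ι.app j).1 x :=
  DFunLike.congr_fun (congrArg Subtype.val (c.w u)) x

namespace FPCMColimit

variable {J : Type} [Category J] (F : J ⥤ FPCMObj)

/-- The base point `none` stands for `1`: an event killed by some `F u` is identified with it. -/
inductive Rel : Option (Σ j, (F.obj j).E) → Option (Σ j, (F.obj j).E) → Prop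
  | map_trc {j k : J} (u : j ⟶ k) (e : (F.obj j).E) (e' : (F.obj k).E)
      (h : (F.map u).1 (trc e) = trc e') : Rel (some ⟨j, e⟩) (some ⟨k, e'⟩)
  | map_one {j k : J} (u : j ⟶ k) (e : (F.obj j).E) (h : (F.map u).1 (trc e) = 1) :
      Rel (some ⟨j, e⟩) none

abbrev Events : Type := Quot (Rel F)

abbrev basePoint : Events F := Quot.mk _ none

def event (j : J) (e : (F.obj j).E) : Events F := Quot.mk _ (some ⟨j, e⟩)

def indep : Set ({x // x ≠ basePoint F} × {x // x ≠ basePoint F}) :=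
  {p | p.1 ≠ p.2 ∧ ∃ (j : J) (a b : (F.obj j).E), (a, b) ∈ (F.obj j).I ∧
    p.1.val = event F j a ∧ p.2.val = event F j b}

variable {F} in
theorem event_eq_of_map_trc {j k : J} {u : j ⟶ k} {e : (F.obj j).E} {e' : (F.obj k).E}
    (h : (F.map u).1 (trc e) = trc e') : event F j e = event F k e' :=
  Quot.sound (Rel.map_trc u e e' h)

variable {F} in
theorem event_eq_basePoint_of_map_trc {j k : J} {u : j ⟶ k} {e : (F.obj j).E}
    (h : (F.map u).1 (trc e) = 1) : event F j e = basePoint F :=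
  Quot.sound (Rel.map_one u e h)

abbrev pt : FPCMObj where
  E := {x // x ≠ basePoint F}
  I := indep F
  indep :=
    { irrefl := fun _ h => h.1 rfl
      symm := by
        rintro a b ⟨hne, j, x, y, hxy, hx, hy⟩
        exact ⟨hne.symm, j, y, x, (F.obj j).indep.symm _ _ hxy, hy, hx⟩ }

theorem exists_event_eq (x : (pt F).E) : ∃ (j : J) (e : (F.obj j).E), event F j e = x.val := by
  obtain ⟨_ | ⟨j, e⟩, hx⟩ := Quot.exists_rep x.val
  · exact absurd hx.symm x.2
  · exact ⟨j, e, hx⟩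

noncomputable def legHom (j : J) :
    TraceMonoid (F.obj j).E (F.obj j).I →* TraceMonoid {x // x ≠ basePoint F} (indep F) :=
  liftHom (fun e => trcOrOne _ (event F j e)) fun a b hab =>
    trcOrOne_mul_comm fun _ _ hne =>
      ⟨fun h => hne (congrArg Subtype.val h), j, a, b, hab, rfl, rfl⟩

theorem legHom_trc (j : J) (e : (F.obj j).E) : legHom F j (trc e) = trcOrOne _ (event F j e) :=
  liftHom_trc _ _ e

noncomputable def leg (j : J) : F.obj j ⟶ pt F :=
  ⟨legHom F j, TraceMonoid.isBasic_liftHom _ fun _ => trcOrOne_eq_trc_or_eq_one _⟩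

theorem exists_legHom_trc_eq (x : (pt F).E) :
    ∃ (j : J) (e : (F.obj j).E), legHom F j (trc e) = trc x := by
  obtain ⟨j, e, hx⟩ := exists_event_eq F x
  exact ⟨j, e, by rw [legHom_trc, hx, trcOrOne_coe]⟩

theorem leg_naturality {j k : J} (u : j ⟶ k) : F.map u ≫ leg F k = leg F j := by
  refine FPCMObj.hom_ext fun e => ?_
  show legHom F k ((F.map u).1 (trc e)) = legHom F j (trc e)
  rw [legHom_trc]
  rcases (F.map u).2 e with ⟨e', he⟩ | he
  · rw [he, legHom_trc, event_eq_of_map_trc he]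
  · rw [he, map_one, event_eq_basePoint_of_map_trc he, trcOrOne_self]

noncomputable def cocone : Cocone F where
  pt := pt F
  ι :=
    { app := leg F
      naturality := fun _ _ u => (leg_naturality F u).trans (Category.comp_id _).symm }

variable {F} (c : Cocone F)

def descEvent : Option (Σ j, (F.obj j).E) → TraceMonoid c.pt.E c.pt.I
  | none => 1
  | some ⟨j, e⟩ => (c.ι.app j).1 (trc e)

theorem descEvent_eq_of_rel : ∀ p q, Rel F p q → descEvent c p = descEvent c q
  | _, _, .map_trc u e e' h => by
    rw [descEvent, descEvent, ← h, FPCMObj.cocone_w_apply]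
  | _, _, .map_one u e h => by
    rw [descEvent, descEvent, ← FPCMObj.cocone_w_apply c u, h, map_one]

def descOnEvents : Events F → TraceMonoid c.pt.E c.pt.I :=
  Quot.lift (descEvent c) (descEvent_eq_of_rel c)

theorem descOnEvents_event (j : J) (e : (F.obj j).E) :
    descOnEvents c (event F j e) = (c.ι.app j).1 (trc e) :=
  rfl

def descHom : TraceMonoid (pt F).E (pt F).I →* TraceMonoid c.pt.E c.pt.I :=
  liftHom (fun x => descOnEvents c x.val) <| by
    rintro x y ⟨-, j, a, b, hab, hx, hy⟩
    dsimp only at hx hy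
    rw [hx, hy, descOnEvents_event, descOnEvents_event, ← map_mul, ← map_mul, trc_comm hab]

theorem descHom_trc (x : (pt F).E) : descHom c (trc x) = descOnEvents c x.val :=
  liftHom_trc _ _ x

def desc : pt F ⟶ c.pt :=
  ⟨descHom c, fun x => by
    obtain ⟨j, e, hx⟩ := exists_event_eq F x
    rw [descHom_trc, ← hx, descOnEvents_event]
    exact (c.ι.app j).2 e⟩

theorem leg_desc (j : J) : leg F j ≫ desc c = c.ι.app j :=
  FPCMObj.hom_ext fun e => by
    show descHom c (legHom F j (trc e)) = _
    rw [legHom_trc, map_trcOrOne (descHom c) (descHom_trc c) rfl, descOnEvents_event]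

variable (F) in
theorem hom_ext {Y : FPCMObj} {f g : pt F ⟶ Y} (h : ∀ j, leg F j ≫ f = leg F j ≫ g) :
    f = g :=
  FPCMObj.hom_ext fun x => by
    obtain ⟨j, e, hx⟩ := exists_legHom_trc_eq F x
    rw [← hx]
    exact DFunLike.congr_fun (congrArg Subtype.val (h j)) (trc e)

variable (F) in
noncomputable def isColimit : IsColimit (cocone F) where
  desc := desc
  fac c j := leg_desc c j
  uniq c _ hm := hom_ext F fun j => (hm j).trans (leg_desc c j).symm

end FPCMColimit

instance : HasColimits FPCMObj :=
  ⟨fun _ _ => ⟨fun F => HasColimit.mk ⟨FPCMColimit.cocone F, FPCMColimit.isColimit F⟩⟩⟩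

section RightAdjoint

variable {M : MonCat.{0}}

theorem epsFPCM_trc (m : (RFPCMObj M).E) : epsFPCM M (trc m) = m.val :=
  liftHom_trc _ _ m

theorem epsFPCM_trcOrOne (m : M) : epsFPCM M (trcOrOne 1 m) = m :=
  map_trcOrOne (I := IMon M) (epsFPCM M) (φ := id) epsFPCM_trc rfl m

theorem trcOrOne_epsFPCM {t : TraceMonoid (RFPCMObj M).E (RFPCMObj M).I}
    (ht : (∃ e, t = trc e) ∨ t = 1) : trcOrOne 1 (epsFPCM M t) = t := by
  rcases ht with ⟨e, rfl⟩ | rfl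
  · rw [epsFPCM_trc]
    exact trcOrOne_coe (I := IMon M) e
  · rw [map_one]
    exact trcOrOne_self (I := IMon M)

noncomputable def liftToRFPCM {E : Type} {I : Set (E × E)} (g : TraceMonoid E I →* M) :
    TraceMonoid E I →* TraceMonoid (RFPCMObj M).E (RFPCMObj M).I :=
  liftHom (fun e => trcOrOne 1 (g (trc e))) fun a b hab =>
    trcOrOne_mul_comm fun _ _ hne => ⟨fun h => hne (congrArg Subtype.val h),
      by rw [← map_mul, ← map_mul, trc_comm hab]⟩

theorem liftToRFPCM_trc {E : Type} {I : Set (E × E)} (g : TraceMonoid E I →* M) (e : E) :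
    liftToRFPCM g (trc e) = trcOrOne 1 (g (trc e)) :=
  liftHom_trc _ _ e

noncomputable def UFPCM.homEquiv (X : FPCMObj) (M : MonCat.{0}) :
    (UFPCM.obj X ⟶ M) ≃ (X ⟶ RFPCMObj M) where
  toFun g :=
    ⟨liftToRFPCM g.hom, TraceMonoid.isBasic_liftHom _ fun _ => trcOrOne_eq_trc_or_eq_one _⟩
  invFun h := MonCat.ofHom ((epsFPCM M).comp h.1)
  left_inv g := MonCat.Hom.ext <| TraceMonoid.hom_ext fun e => by
    show epsFPCM M (liftToRFPCM g.hom (trc e)) = g (trc e)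
    exact (congrArg _ (liftToRFPCM_trc g.hom e)).trans (epsFPCM_trcOrOne _)
  right_inv h := FPCMObj.hom_ext fun e => by
    show liftToRFPCM ((epsFPCM M).comp h.1) (trc e) = h.1 (trc e)
    rw [liftToRFPCM_trc, MonoidHom.comp_apply, trcOrOne_epsFPCM (h.2 e)]

theorem UFPCM.homEquiv_symm_comp {X X' : FPCMObj} (f : X' ⟶ X) (h : X ⟶ RFPCMObj M) :
    (UFPCM.homEquiv X' M).symm (f ≫ h) = UFPCM.map f ≫ (UFPCM.homEquiv X M).symm h :=
  rfl

noncomputable def UFPCM.adjunction :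
    UFPCM ⊣ Adjunction.rightAdjointOfEquiv UFPCM.homEquiv fun _ _ _ f g => by
      rw [← Equiv.eq_symm_apply, UFPCM.homEquiv_symm_comp, Equiv.symm_apply_apply] :=
  Adjunction.adjunctionOfEquivRight _ _

end RightAdjoint

/-- The category `FPCM` is cocomplete, and the inclusion functor `FPCM → Mon`
preserves all small colimits. -/
theorem fpcm_cocomplete_and_inclusion_preserves_colimits :
    HasColimits FPCMObj ∧ Nonempty (PreservesColimits UFPCM) :=
  ⟨inferInstance, ⟨UFPCM.adjunction.leftAdjoint_preservesColimits⟩⟩
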